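/- Let $\tau_1, \tau_2, \tau \geq 1$ with $\tau_2 \leq \tau_1$, and let $\zeta_1, \zeta_2, \zeta$ be complex numbers of modulus $1$. Define $\tilde D((\zeta_a,\tau_a),(\zeta_b,\tau_b)) = \frac{|\zeta_a - \zeta_b|}{\max\{\tau_a,\tau_b\}} + |\log\tau_a - \log\tau_b|$. Then $\tilde D((\zeta_1,\tau_1),(\zeta_2,\tau_2)) \leq \tilde D((\zeta_1,\tau_1),(\zeta,\tau)) + \tilde D((\zeta,\tau),(\zeta_2,\tau_2))$. -/

import Mathlib

/-- `D` in polar-type coordinates: a point is `(ζ, τ)` with `|ζ| = 1`, `τ ≥ 1`. -/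
noncomputable def Dtilde (p q : ℂ × ℝ) : ℝ :=
  ‖p.1 - q.1‖ / max p.2 q.2 + |Real.log p.2 - Real.log q.2|

/-!
If `τ ≤ τ₁`, both angular terms on the right carry a weight at least `1 / τ₁`, and the
logarithmic terms satisfy the ordinary triangle inequality.
If `τ₁ < τ`, the angular weights drop from `1 / τ₁` to `1 / τ`, which costs at most
`2 (1 / τ₁ - 1 / τ)` because `|ζ₁ - ζ₂| ≤ 2`. The detour through `τ` counts
`log τ - log τ₁` twice, and `1 / τ₁ - 1 / τ ≤ log τ - log τ₁` as soon as `τ₁ ≥ 1`.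
-/

open Real

lemma inv_sub_inv_le_log_sub_log {a b : ℝ} (ha : 1 ≤ a) (hab : a ≤ b) :
    a⁻¹ - b⁻¹ ≤ log b - log a := by
  have ha0 : 0 < a := by linarith
  have hb0 : 0 < b := ha0.trans_le hab
  calc a⁻¹ - b⁻¹ = (b - a) / (a * b) := by field_simp
    _ ≤ (b - a) / b :=
        div_le_div_of_nonneg_left (by linarith) hb0 (le_mul_of_one_le_left hb0.le ha)
    _ = 1 - (b / a)⁻¹ := by field_simp
    _ ≤ log (b / a) := one_sub_inv_le_log_of_pos (div_pos hb0 ha0)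
    _ = log b - log a := log_div hb0.ne' ha0.ne'

lemma div_le_div_add_two_mul_log_sub_log {x a b : ℝ} (hx : x ≤ 2)
    (ha : 1 ≤ a) (hab : a ≤ b) : x / a ≤ x / b + 2 * (log b - log a) := by
  have hinv : 0 ≤ a⁻¹ - b⁻¹ := sub_nonneg.2 (inv_anti₀ (by linarith) hab)
  calc x / a = x / b + x * (a⁻¹ - b⁻¹) := by ring
    _ ≤ x / b + 2 * (a⁻¹ - b⁻¹) := by gcongr
    _ ≤ x / b + 2 * (log b - log a) := by grw [inv_sub_inv_le_log_sub_log ha hab]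

lemma norm_sub_le_two {E : Type*} [SeminormedAddCommGroup E] {x y : E}
    (hx : ‖x‖ = 1) (hy : ‖y‖ = 1) : ‖x - y‖ ≤ 2 := by
  linarith [norm_sub_le x y]

lemma Dtilde_of_le {p q : ℂ × ℝ} (h : q.2 ≤ p.2) :
    Dtilde p q = ‖p.1 - q.1‖ / p.2 + |log p.2 - log q.2| := by
  rw [Dtilde, max_eq_left h]

lemma Dtilde_of_ge {p q : ℂ × ℝ} (h : p.2 ≤ q.2) :
    Dtilde p q = ‖p.1 - q.1‖ / q.2 + |log p.2 - log q.2| := by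
  rw [Dtilde, max_eq_right h]

lemma Dtilde_le_add_of_le (ζ₁ ζ₂ ζ : ℂ) {τ₁ τ₂ τ : ℝ} (hτ₂ : 0 < τ₂) (h21 : τ₂ ≤ τ₁)
    (hτ : τ ≤ τ₁) :
    Dtilde (ζ₁, τ₁) (ζ₂, τ₂) ≤ Dtilde (ζ₁, τ₁) (ζ, τ) + Dtilde (ζ, τ) (ζ₂, τ₂) := by
  rw [Dtilde_of_le h21, Dtilde_of_le hτ, Dtilde]
  dsimp only
  have hweight : ‖ζ - ζ₂‖ / τ₁ ≤ ‖ζ - ζ₂‖ / max τ τ₂ :=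
    div_le_div_of_nonneg_left (norm_nonneg _) (hτ₂.trans_le (le_max_right _ _))
      (max_le hτ h21)
  have hangle : ‖ζ₁ - ζ₂‖ / τ₁ ≤ ‖ζ₁ - ζ‖ / τ₁ + ‖ζ - ζ₂‖ / τ₁ := by
    rw [← add_div]
    exact div_le_div_of_nonneg_right (norm_sub_le_norm_sub_add_norm_sub _ _ _) (by linarith)
  linarith [abs_sub_le (log τ₁) (log τ) (log τ₂)]

lemma Dtilde_le_add_of_lt {ζ₁ ζ₂ : ℂ} (ζ : ℂ) {τ₁ τ₂ τ : ℝ} (hζ₁ : ‖ζ₁‖ = 1) (hζ₂ : ‖ζ₂‖ = 1)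
    (hτ₁ : 1 ≤ τ₁) (hτ₂ : 0 < τ₂) (h21 : τ₂ ≤ τ₁) (hτ : τ₁ < τ) :
    Dtilde (ζ₁, τ₁) (ζ₂, τ₂) ≤ Dtilde (ζ₁, τ₁) (ζ, τ) + Dtilde (ζ, τ) (ζ₂, τ₂) := by
  rw [Dtilde_of_le h21, Dtilde_of_ge hτ.le, Dtilde_of_le (h21.trans hτ.le)]
  dsimp only
  have hlog₁₂ : log τ₂ ≤ log τ₁ := log_le_log hτ₂ h21
  have hlog : log τ₁ ≤ log τ := log_le_log (by linarith) hτ.le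
  rw [abs_of_nonneg (sub_nonneg.2 hlog₁₂), abs_of_nonpos (sub_nonpos.2 hlog),
    abs_of_nonneg (by linarith)]
  have hslack := div_le_div_add_two_mul_log_sub_log (norm_sub_le_two hζ₁ hζ₂) hτ₁ hτ.le
  have hangle : ‖ζ₁ - ζ₂‖ / τ ≤ ‖ζ₁ - ζ‖ / τ + ‖ζ - ζ₂‖ / τ := by
    rw [← add_div]
    exact div_le_div_of_nonneg_right (norm_sub_le_norm_sub_add_norm_sub _ _ _) (by linarith)
  linarith

theorem stmt_2 (ζ₁ ζ₂ ζ : ℂ) (τ₁ τ₂ τ : ℝ)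
    (hζ₁ : ‖ζ₁‖ = 1) (hζ₂ : ‖ζ₂‖ = 1)
    (hτ₁ : 1 ≤ τ₁) (hτ₂ : 1 ≤ τ₂) (h21 : τ₂ ≤ τ₁) :
    Dtilde (ζ₁, τ₁) (ζ₂, τ₂) ≤ Dtilde (ζ₁, τ₁) (ζ, τ) + Dtilde (ζ, τ) (ζ₂, τ₂) := by
  have hτ₂₀ : 0 < τ₂ := by linarith
  rcases le_or_gt τ τ₁ with hle | hlt
  · exact Dtilde_le_add_of_le ζ₁ ζ₂ ζ hτ₂₀ h21 hle
  · exact Dtilde_le_add_of_lt ζ hζ₁ hζ₂ hτ₁ hτ₂₀ h21 hlt
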